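/- The prop Fun whose morphisms n → m are functions Fin n → Fin m (with composition of functions and tensor given by disjoint union) is generated by the multiplication μ : 2 → 1 (the unique function Fin 2 → Fin 1) and the unit η : 0 → 1 (the unique function Fin 0 → Fin 1) together with symmetries: every function Fin n → Fin m can be written as a composite of tensor products of identities, symmetries, μ and η. Moreover μ and η satisfy the commutative monoid axioms: associativity μ ∘ (μ ⊗ id) = μ ∘ (id ⊗ μ), unit μ ∘ (η ⊗ id) = id, and commutativity μ ∘ σ = μ where σ is the swap on Fin 2. -/

import Mathlib

/-! Induction on the size of the domain: `f : Fin (n + 1) → Fin m` is `f ∘ castSucc` tensored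
with `id₁`, followed by the map `Fin (m + 1) → Fin m` that fixes `Fin m` and sends the new point
to `f (last n)`. Up to swaps, that map is `id ⊗ μ`. With an empty domain, `f` is a tensor power
of `η`. -/

/-- Tensor (disjoint union) of functions between finite sets: `f` acts on the
first block and `g` (shifted) on the second. -/
def tensorFun {n m k l : ℕ} (f : Fin n → Fin m) (g : Fin k → Fin l) :
    Fin (n + k) → Fin (m + l) :=
  Fin.addCases (fun i => (f i).castAdd l) (fun j => (g j).natAdd m)

/-- The multiplication `μ : 2 → 1`, the unique function `Fin 2 → Fin 1`. -/
def muFun : Fin 2 → Fin 1 := fun _ => 0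

/-- The unit `η : 0 → 1`, the unique function `Fin 0 → Fin 1`. -/
def etaFun : Fin 0 → Fin 1 := Fin.elim0

/-- The class of morphisms of the prop `Fun` generated from identities,
symmetries, `μ` and `η` under composition and tensor product. -/
inductive FunGen : ∀ {n m : ℕ}, (Fin n → Fin m) → Prop
  | id (n : ℕ) : FunGen (id : Fin n → Fin n)
  | symm {n : ℕ} (e : Equiv.Perm (Fin n)) : FunGen ⇑e
  | mu : FunGen muFun
  | eta : FunGen etaFun
  | comp {n m k : ℕ} {f : Fin n → Fin m} {g : Fin m → Fin k} :
      FunGen f → FunGen g → FunGen (g ∘ f)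
  | tensor {n m k l : ℕ} {f : Fin n → Fin m} {g : Fin k → Fin l} :
      FunGen f → FunGen g → FunGen (tensorFun f g)

section tensorFun

variable {n m k l : ℕ} (f : Fin n → Fin m) (g : Fin k → Fin l)

@[simp]
lemma tensorFun_castAdd (i : Fin n) : tensorFun f g (i.castAdd k) = (f i).castAdd l := by
  simp [tensorFun]

@[simp]
lemma tensorFun_natAdd (j : Fin k) : tensorFun f g (j.natAdd n) = (g j).natAdd m := by
  simp [tensorFun]

end tensorFun

section idTensorMu

variable {m : ℕ}

lemma val_tensorFun_id_muFun (i : Fin (m + 2)) :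
    (tensorFun (id : Fin m → Fin m) muFun i).val = min i.val m := by
  cases i using Fin.addCases <;> simp [muFun]

lemma tensorFun_id_muFun_castSucc (j : Fin (m + 1)) :
    tensorFun (id : Fin m → Fin m) muFun j.castSucc = j :=
  Fin.ext <| by simp [val_tensorFun_id_muFun, j.is_le]

lemma tensorFun_id_muFun_last :
    tensorFun (id : Fin m → Fin m) muFun (Fin.last (m + 1)) = Fin.last m :=
  Fin.ext <| by simp [val_tensorFun_id_muFun]

lemma lastCases_id_eq_swap_comp_tensorFun_id_muFun (a : Fin (m + 1)) :
    (Fin.lastCases a id : Fin (m + 2) → Fin (m + 1)) =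
      Equiv.swap a (Fin.last m) ∘ tensorFun (id : Fin m → Fin m) muFun ∘
        Equiv.swap a.castSucc (Fin.last m).castSucc := by
  funext i
  induction i using Fin.lastCases with
  | last =>
    rw [Fin.lastCases_last, Function.comp_apply, Function.comp_apply,
      Equiv.swap_apply_of_ne_of_ne (Fin.castSucc_lt_last _).ne' (Fin.castSucc_lt_last _).ne',
      tensorFun_id_muFun_last, Equiv.swap_apply_right]
  | cast j =>
    simp [(Fin.castSucc_injective _).swap_apply, tensorFun_id_muFun_castSucc]

end idTensorMu

lemma eq_lastCases_id_comp_tensorFun {n m : ℕ} (f : Fin (n + 1) → Fin m) :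
    f = Fin.lastCases (f (Fin.last n)) id ∘ tensorFun (f ∘ Fin.castSucc) (id : Fin 1 → Fin 1) := by
  funext i
  induction i using Fin.addCases with
  | left j =>
    simp only [Function.comp_apply, tensorFun_castAdd]
    exact (Fin.lastCases_castSucc (motive := fun _ => Fin m) (cast := fun i => i) _).symm
  | right k =>
    obtain rfl := Fin.fin_one_eq_zero k
    simp only [Function.comp_apply, tensorFun_natAdd]
    exact (Fin.lastCases_last (motive := fun _ => Fin m)).symm

lemma funGen_lastCases_id {m : ℕ} (a : Fin (m + 1)) :
    FunGen (Fin.lastCases a id : Fin (m + 2) → Fin (m + 1)) := by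
  rw [lastCases_id_eq_swap_comp_tensorFun_id_muFun]
  exact (FunGen.symm _).comp (((FunGen.id m).tensor .mu).comp (.symm _))

lemma funGen_of_fin_zero : ∀ {m : ℕ} (f : Fin 0 → Fin m), FunGen f
  | 0, f => by simpa [Subsingleton.elim f id] using FunGen.id 0
  | m + 1, f => by
    rw [show f = tensorFun (Fin.elim0 : Fin 0 → Fin m) etaFun from funext (·.elim0)]
    exact (funGen_of_fin_zero _).tensor .eta

theorem funGen : ∀ {n m : ℕ} (f : Fin n → Fin m), FunGen f
  | 0, _, f => funGen_of_fin_zero f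
  | _ + 1, 0, f => (f 0).elim0
  | _ + 1, _ + 1, f => by
    rw [eq_lastCases_id_comp_tensorFun f]
    exact ((funGen _).tensor (.id 1)).comp (funGen_lastCases_id _)

/-- The prop `Fun` of functions between finite sets is generated by `μ`, `η`
and the symmetries: every function `Fin n → Fin m` is a composite of tensor
products of identities, symmetries, `μ` and `η`.  Moreover `μ` and `η` satisfy
the commutative monoid axioms: associativity, unit and commutativity. -/
theorem fun_prop_generated_by_commutative_monoid :
    (∀ (n m : ℕ) (f : Fin n → Fin m), FunGen f) ∧
    (muFun ∘ tensorFun muFun (id : Fin 1 → Fin 1) =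
      muFun ∘ tensorFun (id : Fin 1 → Fin 1) muFun) ∧
    (muFun ∘ tensorFun etaFun (id : Fin 1 → Fin 1) = id) ∧
    (muFun ∘ ⇑(Equiv.swap (0 : Fin 2) 1) = muFun) :=
  ⟨fun _ _ => funGen, Subsingleton.elim _ _, Subsingleton.elim _ _, Subsingleton.elim _ _⟩
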